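/- arXiv:2104.12264 — 2 statements merged into one kernel-verified Lean document; each statement's English description precedes it below -/
import Mathlib

section
/- For every prime p > 3 and every integer k ≥ 1, p·B_{k(p-1)} ≡ ((k−2)(k−1)/2)·(p−1) − k(k−2)·p·B_{p-1} + (k(k−1)/2)·p·B_{2p-2} (mod p³). -/
/-- `a ≡ b (mod p^n)` as rationals: `p^n` divides the numerator of `a - b`,
the denominator being prime to `p`. -/
def rcong (p n : ℕ) (a b : ℚ) : Prop :=
  a = b ∨ (n : ℤ) ≤ padicValRat p (a - b)

open Finset

namespace SunS3

variable {p : ℕ} [hp : Fact p.Prime]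

lemma aux5 (v : ℕ) : v + 5 ≤ 5 ^ (v + 1) := by
  induction v with
  | zero => norm_num
  | succ n ih =>
    have : 5 ^ (n+2) = 5 * 5 ^ (n+1) := by ring
    omega

lemma val_bound (hgt : 3 < p) {c : ℕ} (hc : 0 < c) :
    padicValNat p c = 0 ∨ padicValNat p c + 4 ≤ c := by
  by_cases h0 : padicValNat p c = 0
  · exact Or.inl h0
  · right
    have h1 : 1 ≤ padicValNat p c := Nat.one_le_iff_ne_zero.mpr h0
    have h2 : p ^ padicValNat p c ≤ c := Nat.le_of_dvd hc pow_padicValNat_dvd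
    have hp5 : 5 ≤ p := by
      obtain ⟨m, hm⟩ := hp.out.odd_of_ne_two (by omega)
      omega
    have h3 : 5 ^ padicValNat p c ≤ p ^ padicValNat p c :=
      Nat.pow_le_pow_left hp5 _
    have h4 := aux5 (padicValNat p c - 1)
    have : padicValNat p c - 1 + 1 = padicValNat p c := by omega
    rw [this] at h4
    omega

lemma norm_pow_div (hgt : 3 < p) {m c d : ℕ} (hc : 0 < c) (h : padicValNat p c + d ≤ m) :
    padicNorm p ((p : ℚ) ^ m / (c : ℚ)) ≤ (p : ℚ) ^ (-(d : ℤ)) := by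
  have hp1 : 1 < p := hp.out.one_lt
  have hpq : (1:ℚ) < (p:ℚ) := by exact_mod_cast hp1
  have hpne : (p:ℚ) ≠ 0 := by positivity
  have hcne : (c:ℚ) ≠ 0 := Nat.cast_ne_zero.mpr hc.ne'
  have hx : (p : ℚ) ^ m / (c : ℚ) ≠ 0 := div_ne_zero (pow_ne_zero _ hpne) hcne
  rw [padicNorm.eq_zpow_of_nonzero hx, padicValRat.div (pow_ne_zero _ hpne) hcne,
    padicValRat.pow (q := (p:ℚ)), padicValRat.self hp1, ← padicValRat_of_nat]
  rw [zpow_le_zpow_iff_right₀ hpq]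
  have : (padicValNat p c : ℤ) + d ≤ m := by exact_mod_cast h
  omega

end SunS3

namespace SunS3

variable {p : ℕ} [hp : Fact p.Prime]

/-- Faulhaber rewritten with denominators `n+1-j`. -/
lemma faulhaber' (n : ℕ) :
    (∑ x ∈ range p, (x : ℚ) ^ n) =
      ∑ j ∈ range (n + 1),
        (n.choose j : ℚ) * bernoulli j * (p : ℚ) ^ (n + 1 - j) / ((n + 1 - j : ℕ) : ℚ) := by
  rw [_root_.sum_range_pow]
  refine Finset.sum_congr rfl fun j hj => ?_
  have hjn : j ≤ n := by simpa [Nat.lt_succ_iff] using hj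
  have hkey : (n.choose j : ℚ) * ((n + 1 : ℕ) : ℚ) = ((n+1).choose j : ℚ) * ((n + 1 - j : ℕ) : ℚ) := by
    exact_mod_cast congrArg (Nat.cast (R := ℚ)) (Nat.choose_mul_succ_eq n j)
  have h1 : ((n : ℚ) + 1) ≠ 0 := by positivity
  have h2 : ((n + 1 - j : ℕ) : ℚ) ≠ 0 := by
    have : 0 < n + 1 - j := by omega
    exact_mod_cast Nat.cast_pos.mpr this |>.ne'
  rw [div_eq_div_iff (by exact_mod_cast h1) h2]
  push_cast at hkey ⊢
  linear_combination (-(bernoulli j * (p:ℚ) ^ (n + 1 - j))) * hkey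

lemma pB_eq (n : ℕ) :
    (p : ℚ) * bernoulli n =
      (∑ x ∈ range p, (x : ℚ) ^ n) -
        ∑ j ∈ range n,
          (n.choose j : ℚ) * bernoulli j * (p : ℚ) ^ (n + 1 - j) / ((n + 1 - j : ℕ) : ℚ) := by
  rw [faulhaber' n, Finset.sum_range_succ]
  simp [Nat.add_sub_cancel_left, mul_comm]

lemma norm_S_le (n : ℕ) : padicNorm p (∑ x ∈ range p, (x : ℚ) ^ n) ≤ 1 := by
  have : (∑ x ∈ range p, (x : ℚ) ^ n) = ((∑ x ∈ range p, x ^ n : ℕ) : ℚ) := by push_cast; rfl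
  rw [this]
  exact padicNorm.of_nat _

lemma pB_int (hgt : 3 < p) : ∀ i, padicNorm p ((p : ℚ) * bernoulli i) ≤ 1 := by
  intro i
  induction i using Nat.strong_induction_on with
  | _ i IH =>
    rw [pB_eq]
    refine le_trans padicNorm.sub (max_le (norm_S_le i) ?_)
    refine padicNorm.sum_le' (fun j hj => ?_) zero_le_one
    have hji : j < i := Finset.mem_range.mp hj
    have hexp : i + 1 - j = (i - j - 1) + 1 + 1 := by omega
    have hrw : (i.choose j : ℚ) * bernoulli j * (p : ℚ) ^ (i + 1 - j) / ((i + 1 - j : ℕ) : ℚ)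
        = (i.choose j : ℚ) * ((p : ℚ) * bernoulli j) *
          ((p : ℚ) ^ (i - j) / ((i + 1 - j : ℕ) : ℚ)) := by
      have : (p:ℚ) ^ (i + 1 - j) = (p:ℚ) * (p:ℚ) ^ (i - j) := by
        rw [show i + 1 - j = (i - j) + 1 by omega, pow_succ]; ring
      rw [this]; ring
    rw [hrw, padicNorm.mul, padicNorm.mul]
    have h1 : padicNorm p (i.choose j : ℚ) ≤ 1 := padicNorm.of_nat _
    have h2 : padicNorm p ((p : ℚ) * bernoulli j) ≤ 1 := IH j hji
    have h3 : padicNorm p ((p : ℚ) ^ (i - j) / ((i + 1 - j : ℕ) : ℚ)) ≤ 1 := by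
      have hc : 0 < i + 1 - j := by omega
      have hv : padicValNat p (i + 1 - j) + 1 ≤ i - j := by
        rcases val_bound hgt hc with h | h <;> omega
      refine le_trans (norm_pow_div hgt hc hv) ?_
      have hpq : (1:ℚ) ≤ (p:ℚ) := by exact_mod_cast hp.out.one_lt.le
      calc (p:ℚ) ^ (-(1:ℕ):ℤ) ≤ (p:ℚ) ^ (0:ℤ) := zpow_le_zpow_right₀ hpq (by norm_num)
        _ = 1 := zpow_zero _
    calc padicNorm p (i.choose j : ℚ) * padicNorm p ((p : ℚ) * bernoulli j) *
          padicNorm p ((p : ℚ) ^ (i - j) / ((i + 1 - j : ℕ) : ℚ))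
        ≤ 1 * 1 * 1 := by
          gcongr <;> first | exact padicNorm.nonneg _ | assumption |
            exact mul_nonneg (padicNorm.nonneg _) (padicNorm.nonneg _)
      _ = 1 := by norm_num

end SunS3

namespace SunS3

variable {p : ℕ} [hp : Fact p.Prime]

lemma norm_B_le (hgt : 3 < p) (j : ℕ) : padicNorm p (bernoulli j) ≤ (p : ℚ) := by
  have hpq : (0:ℚ) < (p:ℚ) := by exact_mod_cast hp.out.pos
  have h := pB_int hgt j
  rw [padicNorm.mul, padicNorm.padicNorm_p_of_prime] at h
  calc padicNorm p (bernoulli j) = (p:ℚ)⁻¹ * padicNorm p (bernoulli j) * p := by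
        field_simp
    _ ≤ 1 * p := by
        apply mul_le_mul_of_nonneg_right h hpq.le
    _ = p := one_mul _

lemma sum_pow_dvd (hgt : 3 < p) {i : ℕ} (hi : i ≠ 0) (hnd : ¬ (p - 1) ∣ i) :
    p ∣ ∑ x ∈ range p, x ^ i := by
  rw [← ZMod.natCast_eq_zero_iff]
  push_cast
  have hcast : (∑ x ∈ range p, (x : ZMod p) ^ i) = ∑ y : ZMod p, y ^ i := by
    refine Finset.sum_nbij' (fun x => (x : ZMod p)) (fun y => y.val) ?_ ?_ ?_ ?_ ?_
    · intro a _; exact Finset.mem_univ _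
    · intro a _; exact Finset.mem_range.mpr (ZMod.val_lt a)
    · intro a ha; exact ZMod.val_natCast_of_lt (Finset.mem_range.mp ha)
    · intro a _; exact ZMod.natCast_zmod_val a
    · intro a _; rfl
  rw [hcast]
  classical
  let φ : (ZMod p)ˣ ↪ ZMod p := ⟨fun x ↦ x, fun _ _ h => Units.ext h⟩
  have hmap : Finset.univ.map φ = Finset.univ \ {0} := by
    ext x
    simp only [Finset.mem_map, Finset.mem_univ, Function.Embedding.coeFn_mk, true_and,
      Finset.mem_sdiff, Finset.mem_singleton, φ]; exact (isUnit_iff_ne_zero (a := x))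
  have hsplit : (∑ y : ZMod p, y ^ i) = ∑ y ∈ Finset.univ \ {0}, y ^ i := by
    rw [Finset.sum_sdiff_eq_sub (Finset.subset_univ _), Finset.sum_singleton,
      zero_pow hi, sub_zero]
  rw [hsplit, ← hmap, Finset.sum_map]
  have : (∑ x : (ZMod p)ˣ, ((x : ZMod p)) ^ i) = 0 := by
    rw [FiniteField.sum_pow_units]
    rw [if_neg]
    rwa [ZMod.card]
  exact this

lemma norm_B_int (hgt : 3 < p) {i : ℕ} (hi : i ≠ 0) (hnd : ¬ (p - 1) ∣ i) :
    padicNorm p (bernoulli i) ≤ 1 := by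
  have hppos : (0:ℚ) < (p:ℚ) := by exact_mod_cast hp.out.pos
  have hpq1 : (1:ℚ) ≤ (p:ℚ) := by exact_mod_cast hp.out.one_lt.le
  -- first: padicNorm p (p * bernoulli i) ≤ p⁻¹
  have hS : padicNorm p (∑ x ∈ range p, (x : ℚ) ^ i) ≤ (p : ℚ) ^ (-1 : ℤ) := by
    have hdvd : ((p : ℤ) ^ 1) ∣ ((∑ x ∈ range p, x ^ i : ℕ) : ℤ) := by
      rw [pow_one]
      exact_mod_cast Int.natCast_dvd_natCast.mpr (sum_pow_dvd hgt hi hnd)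
    have := (padicNorm.dvd_iff_norm_le (p := p) (n := 1)
      (z := ((∑ x ∈ range p, x ^ i : ℕ) : ℤ))).mp (by exact_mod_cast hdvd)
    have hcast : (((∑ x ∈ range p, x ^ i : ℕ) : ℤ) : ℚ) = ∑ x ∈ range p, (x : ℚ) ^ i := by
      push_cast; rfl
    rwa [hcast] at this
  have hmain : padicNorm p ((p : ℚ) * bernoulli i) ≤ (p : ℚ) ^ (-1 : ℤ) := by
    rw [pB_eq]
    refine le_trans padicNorm.sub (max_le hS ?_)
    refine padicNorm.sum_le' (fun j hj => ?_) (by positivity)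
    have hji : j < i := Finset.mem_range.mp hj
    have hrw : (i.choose j : ℚ) * bernoulli j * (p : ℚ) ^ (i + 1 - j) / ((i + 1 - j : ℕ) : ℚ)
        = (i.choose j : ℚ) * ((p : ℚ) * bernoulli j) *
          ((p : ℚ) ^ (i - j) / ((i + 1 - j : ℕ) : ℚ)) := by
      have : (p:ℚ) ^ (i + 1 - j) = (p:ℚ) * (p:ℚ) ^ (i - j) := by
        rw [show i + 1 - j = (i - j) + 1 by omega, pow_succ]; ring
      rw [this]; ring
    rw [hrw, padicNorm.mul, padicNorm.mul]
    have h1 : padicNorm p (i.choose j : ℚ) ≤ 1 := padicNorm.of_nat _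
    have h2 : padicNorm p ((p : ℚ) * bernoulli j) ≤ 1 := pB_int hgt j
    have h3 : padicNorm p ((p : ℚ) ^ (i - j) / ((i + 1 - j : ℕ) : ℚ)) ≤ (p:ℚ) ^ (-1 : ℤ) := by
      have hc : 0 < i + 1 - j := by omega
      have hv : padicValNat p (i + 1 - j) + 1 ≤ i - j := by
        rcases val_bound hgt hc with h | h <;> omega
      exact_mod_cast norm_pow_div hgt hc hv
    calc padicNorm p (i.choose j : ℚ) * padicNorm p ((p : ℚ) * bernoulli j) *
          padicNorm p ((p : ℚ) ^ (i - j) / ((i + 1 - j : ℕ) : ℚ))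
        ≤ 1 * 1 * (p:ℚ) ^ (-1 : ℤ) := by
          gcongr <;> exact padicNorm.nonneg _
      _ = (p:ℚ) ^ (-1 : ℤ) := by norm_num
  -- conclude
  rw [padicNorm.mul, padicNorm.padicNorm_p_of_prime] at hmain
  have : (p:ℚ) ^ (-1 : ℤ) = (p:ℚ)⁻¹ := by simp
  rw [this] at hmain
  have hinv : (0:ℚ) < (p:ℚ)⁻¹ := by positivity
  calc padicNorm p (bernoulli i) = ((p:ℚ)⁻¹ * padicNorm p (bernoulli i)) * p := by field_simp
    _ ≤ (p:ℚ)⁻¹ * p := mul_le_mul_of_nonneg_right hmain hppos.le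
    _ = 1 := by field_simp

end SunS3

namespace SunS3

variable {p : ℕ} [hp : Fact p.Prime]

lemma norm_S_sub_pB (hgt : 3 < p) {n : ℕ} (hn4 : 4 ≤ n) (hne : n % 2 = 0)
    (hdvd : (p - 1) ∣ n) :
    padicNorm p ((∑ x ∈ range p, (x : ℚ) ^ n) - (p : ℚ) * bernoulli n)
      ≤ (p : ℚ) ^ (-3 : ℤ) := by
  have hp5 : 5 ≤ p := by
    obtain ⟨m, hm⟩ := hp.out.odd_of_ne_two (by omega)
    omega
  have hp4 : 4 ≤ p - 1 := by omega
  have hppos : (0:ℚ) < (p:ℚ) := by exact_mod_cast hp.out.pos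
  have hkey : (∑ x ∈ range p, (x : ℚ) ^ n) - (p : ℚ) * bernoulli n =
      ∑ j ∈ range n,
        (n.choose j : ℚ) * bernoulli j * (p : ℚ) ^ (n + 1 - j) / ((n + 1 - j : ℕ) : ℚ) := by
    rw [pB_eq]; ring
  rw [hkey]
  refine padicNorm.sum_le' (fun j hj => ?_) (by positivity)
  have hji : j < n := Finset.mem_range.mp hj
  by_cases hj1 : j = n - 1
  · -- odd Bernoulli number vanishes
    have hodd : Odd j := by refine Nat.odd_iff.mpr ?_; omega
    have hB : bernoulli j = 0 := by
      rw [bernoulli_eq_bernoulli'_of_ne_one (by omega), bernoulli'_eq_zero_of_odd hodd (by omega)]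
    rw [hB]
    simp only [mul_zero, zero_mul, zero_div, padicNorm.zero]
    positivity
  · have hrw : (n.choose j : ℚ) * bernoulli j * (p : ℚ) ^ (n + 1 - j) / ((n + 1 - j : ℕ) : ℚ)
        = (n.choose j : ℚ) * bernoulli j * ((p : ℚ) ^ (n + 1 - j) / ((n + 1 - j : ℕ) : ℚ)) := by
      ring
    rw [hrw, padicNorm.mul, padicNorm.mul]
    have h1 : padicNorm p (n.choose j : ℚ) ≤ 1 := padicNorm.of_nat _
    by_cases hj2 : j = n - 2
    · -- term with `p^3 / 3`
      have hB : padicNorm p (bernoulli j) ≤ 1 := by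
        refine norm_B_int hgt (by omega) (fun hdd => ?_)
        have h2 : (p - 1) ∣ (n - j) := Nat.dvd_sub hdvd hdd
        have hnj : n - j = 2 := by omega
        rw [hnj] at h2
        exact absurd (Nat.le_of_dvd (by norm_num) h2) (by omega)
      have hexp : n + 1 - j = 3 := by omega
      have h3 : padicNorm p ((p : ℚ) ^ (n + 1 - j) / ((n + 1 - j : ℕ) : ℚ))
          ≤ (p:ℚ) ^ (-3 : ℤ) := by
        rw [hexp]
        refine le_trans (norm_pow_div hgt (c := 3) (d := 3) (by norm_num) ?_) (by norm_num)
        have h30 : padicValNat p 3 = 0 := padicValNat.eq_zero_of_not_dvd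
          (fun h => absurd (Nat.le_of_dvd (by norm_num) h) (by omega))
        omega
      calc padicNorm p (n.choose j : ℚ) * padicNorm p (bernoulli j) *
            padicNorm p ((p : ℚ) ^ (n + 1 - j) / ((n + 1 - j : ℕ) : ℚ))
          ≤ 1 * 1 * (p:ℚ) ^ (-3 : ℤ) := by gcongr <;> exact padicNorm.nonneg _
        _ = (p:ℚ) ^ (-3 : ℤ) := by norm_num
    · -- generic term : j ≤ n - 3
      have hj3 : j ≤ n - 3 := by omega
      have hB : padicNorm p (bernoulli j) ≤ (p:ℚ) := norm_B_le hgt j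
      have hc : 0 < n + 1 - j := by omega
      have h3 : padicNorm p ((p : ℚ) ^ (n + 1 - j) / ((n + 1 - j : ℕ) : ℚ))
          ≤ (p:ℚ) ^ (-4 : ℤ) := by
        refine le_trans (norm_pow_div hgt hc (d := 4) ?_) (by norm_num)
        rcases val_bound hgt hc with h | h <;> omega
      calc padicNorm p (n.choose j : ℚ) * padicNorm p (bernoulli j) *
            padicNorm p ((p : ℚ) ^ (n + 1 - j) / ((n + 1 - j : ℕ) : ℚ))
          ≤ 1 * (p:ℚ) * (p:ℚ) ^ (-4 : ℤ) := by gcongr <;> exact padicNorm.nonneg _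
        _ = (p:ℚ) ^ (-3 : ℤ) := by
          rw [one_mul]
          rw [show ((p:ℚ)) * (p:ℚ) ^ (-4 : ℤ) = (p:ℚ) ^ (1 : ℤ) * (p:ℚ) ^ (-4 : ℤ) by norm_num,
            ← zpow_add₀ hppos.ne']
          norm_num

end SunS3

namespace SunS3

variable {p : ℕ} [hp : Fact p.Prime]

lemma sum_modEq {α : Type*} {s : Finset α} {f g : α → ℤ} {n : ℤ}
    (h : ∀ i ∈ s, f i ≡ g i [ZMOD n]) : (∑ i ∈ s, f i) ≡ ∑ i ∈ s, g i [ZMOD n] := by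
  show (∑ i ∈ s, f i) % n = (∑ i ∈ s, g i) % n
  rw [Finset.sum_int_mod s n f, Finset.sum_int_mod s n g]
  congr 1
  exact Finset.sum_congr rfl h

lemma binom_cong (c : ℤ) (k : ℕ) :
    (1 + c) ^ k ≡ 1 + k * c + (k.choose 2 : ℤ) * c ^ 2 [ZMOD c ^ 3] := by
  induction k with
  | zero => simp
  | succ k ih =>
    have h1 : (1 + c) ^ (k + 1) = (1 + c) ^ k * (1 + c) := by ring
    rw [h1]
    refine (ih.mul Int.ModEq.rfl).trans ?_
    have hch : ((k+1).choose 2 : ℤ) = (k.choose 2 : ℤ) + k := by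
      push_cast [Nat.choose_succ_succ k 1, Nat.choose_one_right]
      ring
    refine Int.modEq_iff_dvd.mpr ⟨-(k.choose 2 : ℤ), ?_⟩
    push_cast [hch]
    ring

/-- The Fermat quotient of `x`, as an integer. -/
def fq (p x : ℕ) : ℤ := ((x : ℤ) ^ (p - 1) - 1) / p

lemma fq_spec {x : ℕ} (hx : x ∈ Finset.Ico 1 p) :
    (p : ℤ) * fq p x = (x : ℤ) ^ (p - 1) - 1 := by
  obtain ⟨hx1, hx2⟩ := Finset.mem_Ico.mp hx
  have hnd : ¬ p ∣ x := fun h => absurd (Nat.le_of_dvd (by omega) h) (by omega)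
  have hdvd : (p : ℤ) ∣ (x : ℤ) ^ (p - 1) - 1 := by
    have hzx : ((x : ℕ) : ZMod p) ≠ 0 := by
      rw [Ne, ZMod.natCast_eq_zero_iff]
      exact hnd
    have := ZMod.pow_card_sub_one_eq_one hzx
    rw [← ZMod.intCast_zmod_eq_zero_iff_dvd]
    push_cast
    rw [this]
    ring
  exact Int.mul_ediv_cancel' hdvd

/-- Sums of Fermat quotients and their squares. -/
def T1 (p : ℕ) : ℤ := ∑ x ∈ Finset.Ico 1 p, fq p x
def T2 (p : ℕ) : ℤ := ∑ x ∈ Finset.Ico 1 p, (fq p x) ^ 2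

lemma S_cong (hgt : 3 < p) (k : ℕ) (hk : 1 ≤ k) :
    ((∑ x ∈ range p, x ^ (k * (p - 1)) : ℕ) : ℤ) ≡
      ((p : ℤ) - 1) + k * p * T1 p + (k.choose 2 : ℤ) * p ^ 2 * T2 p [ZMOD (p : ℤ) ^ 3] := by
  have hp5 : 5 ≤ p := by
    obtain ⟨m, hm⟩ := hp.out.odd_of_ne_two (by omega)
    omega
  have hn1 : 1 ≤ k * (p - 1) := by
    have : 1 ≤ p - 1 := by omega
    exact Nat.one_le_iff_ne_zero.mpr (by positivity)
  have hcast : ((∑ x ∈ range p, x ^ (k * (p - 1)) : ℕ) : ℤ)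
      = ∑ x ∈ Finset.Ico 1 p, (x : ℤ) ^ (k * (p - 1)) := by
    push_cast
    rw [Finset.range_eq_Ico, Finset.sum_eq_sum_Ico_succ_bot (by omega : 0 < p)]
    simp only [Nat.cast_zero]
    rw [zero_pow (Nat.one_le_iff_ne_zero.mp hn1), zero_add]
  rw [hcast]
  have hterm : ∀ x ∈ Finset.Ico 1 p, (x : ℤ) ^ (k * (p - 1)) ≡
      1 + k * ((p:ℤ) * fq p x) + (k.choose 2 : ℤ) * ((p:ℤ) * fq p x) ^ 2
        [ZMOD (p : ℤ) ^ 3] := by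
    intro x hx
    have h1 : (x : ℤ) ^ (k * (p - 1)) = (1 + (p:ℤ) * fq p x) ^ k := by
      rw [fq_spec hx, mul_comm k (p-1), pow_mul]
      ring_nf
    rw [h1]
    refine Int.ModEq.of_dvd ?_ (binom_cong ((p:ℤ) * fq p x) k)
    exact ⟨(fq p x) ^ 3, by ring⟩
  refine (sum_modEq hterm).trans ?_
  have : (∑ x ∈ Finset.Ico 1 p,
      (1 + k * ((p:ℤ) * fq p x) + (k.choose 2 : ℤ) * ((p:ℤ) * fq p x) ^ 2)) =
      ((p : ℤ) - 1) + k * p * T1 p + (k.choose 2 : ℤ) * p ^ 2 * T2 p := by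
    rw [Finset.sum_add_distrib, Finset.sum_add_distrib, Finset.sum_const, Nat.card_Ico]
    unfold T1 T2
    rw [Finset.mul_sum, Finset.mul_sum]
    have h1 : (p - 1) • (1:ℤ) = (p : ℤ) - 1 := by
      rw [nsmul_eq_mul, mul_one]
      push_cast [Nat.cast_sub (by omega : 1 ≤ p)]
      ring
    rw [h1]
    congr 1
    · congr 1
      exact Finset.sum_congr rfl fun x _ => by ring
    · exact Finset.sum_congr rfl fun x _ => by ring
  rw [this]

end SunS3

namespace SunS3

variable {p : ℕ} [hp : Fact p.Prime]

lemma rcong_of_norm {a b : ℚ} (h : padicNorm p (a - b) ≤ (p : ℚ) ^ (-3 : ℤ)) :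
    rcong p 3 a b := by
  by_cases hab : a = b
  · exact Or.inl hab
  · right
    have hne : a - b ≠ 0 := sub_ne_zero.mpr hab
    rw [padicNorm.eq_zpow_of_nonzero hne] at h
    have hpq : (1:ℚ) < (p:ℚ) := by exact_mod_cast hp.out.one_lt
    rw [zpow_le_zpow_iff_right₀ hpq] at h
    have : (3:ℤ) ≤ padicValRat p (a - b) := by omega
    exact_mod_cast this

/-- The quadratic (in `j`) integer approximating `p B_{j(p-1)}` mod `p³`. -/
def F (p : ℕ) (j : ℕ) : ℤ :=
  ((p : ℤ) - 1) + j * p * T1 p + (j.choose 2 : ℤ) * p ^ 2 * T2 p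

lemma norm_pB_sub_F (hgt : 3 < p) {j : ℕ} (hj : 1 ≤ j) :
    padicNorm p ((p : ℚ) * bernoulli (j * (p - 1)) - ((F p j : ℤ) : ℚ))
      ≤ (p : ℚ) ^ (-3 : ℤ) := by
  have hp5 : 5 ≤ p := by
    obtain ⟨m, hm⟩ := hp.out.odd_of_ne_two (by omega)
    omega
  set n := j * (p - 1) with hn
  have hn4 : 4 ≤ n := by
    calc 4 ≤ p - 1 := by omega
      _ = 1 * (p - 1) := (one_mul _).symm
      _ ≤ j * (p - 1) := Nat.mul_le_mul_right _ hj
  have hneven : n % 2 = 0 := by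
    have hoddp : p % 2 = 1 := Nat.odd_iff.mp (hp.out.odd_of_ne_two (by omega))
    have h2 : 2 ∣ p - 1 := by omega
    obtain ⟨c, hc⟩ := h2.mul_left j
    omega
  have hdvd : (p - 1) ∣ n := dvd_mul_left (p - 1) j
  have hSA := norm_S_sub_pB (p := p) hgt hn4 hneven hdvd
  have hSF : padicNorm p ((∑ x ∈ range p, (x : ℚ) ^ n) - ((F p j : ℤ) : ℚ))
      ≤ (p : ℚ) ^ (-3 : ℤ) := by
    have hc := (S_cong hgt j hj).symm
    have hdvd3 : ((p : ℤ) ^ 3) ∣ ((∑ x ∈ range p, x ^ n : ℕ) : ℤ) - F p j :=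
      Int.ModEq.dvd hc
    have hle := (padicNorm.dvd_iff_norm_le (p := p) (n := 3)
      (z := ((∑ x ∈ range p, x ^ n : ℕ) : ℤ) - F p j)).mp (by push_cast; exact_mod_cast hdvd3)
    have hcast : ((((∑ x ∈ range p, x ^ n : ℕ) : ℤ) - F p j : ℤ) : ℚ)
        = (∑ x ∈ range p, (x : ℚ) ^ n) - ((F p j : ℤ) : ℚ) := by push_cast; ring
    rw [hcast] at hle
    simpa using hle
  have hrw : (p : ℚ) * bernoulli n - ((F p j : ℤ) : ℚ)
      = ((∑ x ∈ range p, (x : ℚ) ^ n) - ((F p j : ℤ) : ℚ))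
        - ((∑ x ∈ range p, (x : ℚ) ^ n) - (p : ℚ) * bernoulli n) := by ring
  rw [hrw]
  exact le_trans padicNorm.sub (max_le hSF hSA)

end SunS3

theorem sun_S3 (p : ℕ) (hp : p.Prime) (hgt : 3 < p) (k : ℕ) (hk : 1 ≤ k) :
    rcong p 3 ((p : ℚ) * bernoulli (k * (p - 1)))
      ((((k : ℚ) - 2) * ((k : ℚ) - 1) / 2) * ((p : ℚ) - 1)
        - (k : ℚ) * ((k : ℚ) - 2) * ((p : ℚ) * bernoulli (p - 1))
        + ((k : ℚ) * ((k : ℚ) - 1) / 2) * ((p : ℚ) * bernoulli (2 * p - 2))) := by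
  haveI : Fact p.Prime := ⟨hp⟩
  apply SunS3.rcong_of_norm
  have h2p : 2 * p - 2 = 2 * (p - 1) := by omega
  rw [h2p]
  have hdk := SunS3.norm_pB_sub_F (p := p) hgt hk
  have hd1 := SunS3.norm_pB_sub_F (p := p) hgt (le_refl 1)
  have hd2 := SunS3.norm_pB_sub_F (p := p) hgt (by norm_num : 1 ≤ 2)
  rw [one_mul] at hd1
  have hEq : (p : ℚ) * bernoulli (k * (p - 1))
      - ((((k : ℚ) - 2) * ((k : ℚ) - 1) / 2) * ((p : ℚ) - 1)
        - (k : ℚ) * ((k : ℚ) - 2) * ((p : ℚ) * bernoulli (p - 1))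
        + ((k : ℚ) * ((k : ℚ) - 1) / 2) * ((p : ℚ) * bernoulli (2 * (p - 1))))
      = ((p : ℚ) * bernoulli (k * (p - 1)) - ((SunS3.F p k : ℤ) : ℚ))
        + (k : ℚ) * ((k : ℚ) - 2) * ((p : ℚ) * bernoulli (p - 1) - ((SunS3.F p 1 : ℤ) : ℚ))
        - ((k.choose 2 : ℕ) : ℚ) *
            ((p : ℚ) * bernoulli (2 * (p - 1)) - ((SunS3.F p 2 : ℤ) : ℚ)) := by
    unfold SunS3.F
    simp only [show (1:ℕ).choose 2 = 0 from rfl, show (2:ℕ).choose 2 = 1 from rfl]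
    push_cast [Nat.cast_choose_two]
    ring
  rw [hEq]
  have hb1 : padicNorm p ((k : ℚ) * ((k : ℚ) - 2) *
      ((p : ℚ) * bernoulli (p - 1) - ((SunS3.F p 1 : ℤ) : ℚ))) ≤ (p : ℚ) ^ (-3 : ℤ) := by
    rw [padicNorm.mul]
    have hc : padicNorm p ((k : ℚ) * ((k : ℚ) - 2)) ≤ 1 := by
      have : (k : ℚ) * ((k : ℚ) - 2) = (((k : ℤ) * ((k : ℤ) - 2) : ℤ) : ℚ) := by push_cast; ring
      rw [this]
      exact padicNorm.of_int _
    calc padicNorm p ((k : ℚ) * ((k : ℚ) - 2)) *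
          padicNorm p ((p : ℚ) * bernoulli (p - 1) - ((SunS3.F p 1 : ℤ) : ℚ))
        ≤ 1 * (p : ℚ) ^ (-3 : ℤ) := by gcongr <;> exact padicNorm.nonneg _
      _ = (p : ℚ) ^ (-3 : ℤ) := one_mul _
  have hb2 : padicNorm p (((k.choose 2 : ℕ) : ℚ) *
      ((p : ℚ) * bernoulli (2 * (p - 1)) - ((SunS3.F p 2 : ℤ) : ℚ))) ≤ (p : ℚ) ^ (-3 : ℤ) := by
    rw [padicNorm.mul]
    calc padicNorm p ((k.choose 2 : ℕ) : ℚ) *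
          padicNorm p ((p : ℚ) * bernoulli (2 * (p - 1)) - ((SunS3.F p 2 : ℤ) : ℚ))
        ≤ 1 * (p : ℚ) ^ (-3 : ℤ) :=
          mul_le_mul (padicNorm.of_nat _) hd2 (padicNorm.nonneg _) zero_le_one
      _ = (p : ℚ) ^ (-3 : ℤ) := one_mul _
  refine le_trans padicNorm.sub (max_le (le_trans padicNorm.nonarchimedean (max_le hdk hb1)) hb2)
end

section
/- For every prime p and every integer k with 0 ≤ k ≤ p−1, the binomial coefficient satisfies C(p−1, k) ≡ (−1)^k · (1 − p·H_k) (mod p²), where H_k = Σ_{j=1}^{k} 1/j (and H_0 = 0). -/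
section aux

variable {p : ℕ} [hp : Fact p.Prime]

lemma pn_nat_one {m : ℕ} (h1 : 0 < m) (h2 : m < p) : padicNorm p m = 1 := by
  rw [padicNorm.nat_eq_one_iff]
  exact fun hdvd => absurd (Nat.le_of_dvd h1 hdvd) (not_le.mpr h2)

lemma pn_inv_one {n : ℕ} (hlt : n + 1 < p) : padicNorm p (1 / ((n : ℚ) + 1)) = 1 := by
  have h1 : ((n : ℚ) + 1) = ((n + 1 : ℕ) : ℚ) := by push_cast; ring
  rw [h1, padicNorm.div, padicNorm.one, pn_nat_one (Nat.succ_pos n) hlt]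
  norm_num

lemma pn_H_le_one {k : ℕ} (hk : k ≤ p - 1) :
    padicNorm p (∑ j ∈ Finset.range k, 1 / ((j : ℚ) + 1)) ≤ 1 := by
  induction k with
  | zero => simp [padicNorm]
  | succ n ih =>
    have hn : n ≤ p - 1 := le_trans (Nat.le_succ n) hk
    have hlt : n + 1 < p := by have := hp.out.two_le; omega
    rw [Finset.sum_range_succ]
    exact le_trans padicNorm.nonarchimedean (max_le (ih hn) (le_of_eq (pn_inv_one hlt)))

lemma pn_factor_le_one {n : ℕ} (hlt : n + 1 < p) :
    padicNorm p (1 - (p : ℚ) / ((n : ℚ) + 1)) ≤ 1 := by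
  refine le_trans padicNorm.sub (max_le (le_of_eq padicNorm.one) ?_)
  rw [div_eq_mul_one_div, padicNorm.mul, padicNorm.padicNorm_p_of_prime, pn_inv_one hlt, mul_one]
  rw [inv_le_one_iff₀]
  right
  exact_mod_cast hp.out.one_le

lemma claimB : ∀ k : ℕ, k ≤ p - 1 →
    padicNorm p ((∏ j ∈ Finset.range k, (1 - (p : ℚ) / ((j : ℚ) + 1))) -
      (1 - (p : ℚ) * ∑ j ∈ Finset.range k, 1 / ((j : ℚ) + 1))) ≤ (p : ℚ) ^ (-2 : ℤ) := by
  intro k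
  induction k with
  | zero => intro _; simp [padicNorm]
  | succ n ih =>
    intro hk
    have hn : n ≤ p - 1 := le_trans (Nat.le_succ n) hk
    have hlt : n + 1 < p := by have := hp.out.two_le; omega
    have hne : ((n : ℚ) + 1) ≠ 0 := by positivity
    set P := ∏ j ∈ Finset.range n, (1 - (p : ℚ) / ((j : ℚ) + 1)) with hP
    set H := ∑ j ∈ Finset.range n, 1 / ((j : ℚ) + 1) with hH
    have key : (∏ j ∈ Finset.range (n+1), (1 - (p : ℚ) / ((j : ℚ) + 1))) -
        (1 - (p : ℚ) * ∑ j ∈ Finset.range (n+1), 1 / ((j : ℚ) + 1)) =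
        (P - (1 - (p : ℚ) * H)) * (1 - (p : ℚ) / ((n : ℚ) + 1)) +
          (p : ℚ) ^ 2 * (H * (1 / ((n : ℚ) + 1))) := by
      rw [Finset.prod_range_succ, Finset.sum_range_succ, ← hP, ← hH]
      field_simp
      ring
    rw [key]
    refine le_trans padicNorm.nonarchimedean (max_le ?_ ?_)
    · rw [padicNorm.mul]
      calc padicNorm p (P - (1 - (p:ℚ) * H)) * padicNorm p (1 - (p:ℚ)/((n:ℚ)+1))
          ≤ (p : ℚ) ^ (-2 : ℤ) * 1 :=
            mul_le_mul (ih hn) (pn_factor_le_one hlt) (padicNorm.nonneg _) (by positivity)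
        _ = (p : ℚ) ^ (-2 : ℤ) := mul_one _
    · rw [padicNorm.mul, padicNorm.mul]
      have h2 : padicNorm p ((p : ℚ) ^ 2) = (p : ℚ) ^ (-2 : ℤ) := by
        rw [show ((p:ℚ))^2 = (p:ℚ) * p by ring, padicNorm.mul, padicNorm.padicNorm_p_of_prime]
        rw [show (-2 : ℤ) = (-1) + (-1) by norm_num, zpow_add₀ (by exact_mod_cast hp.out.pos.ne')]
        simp [zpow_neg_one]
      rw [h2]
      calc (p : ℚ) ^ (-2 : ℤ) * (padicNorm p H * padicNorm p (1 / ((n:ℚ)+1)))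
          ≤ (p : ℚ) ^ (-2 : ℤ) * (1 * 1) := by
            refine mul_le_mul_of_nonneg_left ?_ (by positivity)
            exact mul_le_mul (pn_H_le_one hn) (le_of_eq (pn_inv_one hlt))
              (padicNorm.nonneg _) zero_le_one
        _ = (p : ℚ) ^ (-2 : ℤ) := by ring

lemma claimA : ∀ k : ℕ, k ≤ p - 1 →
    ((-1 : ℚ)) ^ k * (Nat.choose (p - 1) k : ℚ) =
      ∏ j ∈ Finset.range k, (1 - (p : ℚ) / ((j : ℚ) + 1)) := by
  intro k
  induction k with
  | zero => simp
  | succ n ih =>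
    intro hk
    have hn : n ≤ p - 1 := le_trans (Nat.le_succ n) hk
    have hp1 : 1 ≤ p := hp.out.one_le
    have hne : ((n : ℚ) + 1) ≠ 0 := by positivity
    have hc := Nat.choose_succ_right_eq (p - 1) n
    have hc' : ((Nat.choose (p-1) (n+1) : ℚ)) * ((n : ℚ) + 1) =
        (Nat.choose (p-1) n : ℚ) * ((p : ℚ) - 1 - n) := by
      have := congrArg (fun m : ℕ => (m : ℚ)) hc
      push_cast [Nat.sub_sub, Nat.cast_sub (by omega : 1 + n ≤ p)] at this
      push_cast
      linarith [this]
    rw [Finset.prod_range_succ, ← ih hn, pow_succ]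
    field_simp
    linear_combination (-1:ℚ) * hc'

end aux

theorem binom_p_sub_one_mod_p_sq (p : ℕ) (hp : p.Prime) (k : ℕ) (hk : k ≤ p - 1) :
    rcong p 2 ((Nat.choose (p - 1) k : ℚ))
      ((-1) ^ k * (1 - (p : ℚ) * ∑ j ∈ Finset.range k, 1 / ((j : ℚ) + 1))) := by
  haveI : Fact p.Prime := ⟨hp⟩
  set S := ∑ j ∈ Finset.range k, 1 / ((j : ℚ) + 1) with hS
  set X := (Nat.choose (p - 1) k : ℚ) - (-1) ^ k * (1 - (p : ℚ) * S) with hX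
  rcases eq_or_ne X 0 with h0 | h0
  · left; exact sub_eq_zero.mp (hX.symm.trans h0)
  · right
    rw [show (Nat.choose (p - 1) k : ℚ) - (-1) ^ k * (1 - (p : ℚ) * S) = X from hX.symm]
    have hA := claimA (p := p) k hk
    have hchoose : (Nat.choose (p-1) k : ℚ) =
        (-1) ^ k * ∏ j ∈ Finset.range k, (1 - (p : ℚ) / ((j : ℚ) + 1)) := by
      have h1 : ((-1 : ℚ))^k * ((-1 : ℚ))^k = 1 := by
        rw [← pow_add]; exact (neg_one_pow_eq_one_iff_even (by norm_num)).mpr (Even.add_self k)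
      calc (Nat.choose (p-1) k : ℚ) = ((-1:ℚ))^k * ((-1:ℚ))^k * (Nat.choose (p-1) k : ℚ) := by
            rw [h1, one_mul]
        _ = (-1)^k * ∏ j ∈ Finset.range k, (1 - (p : ℚ) / ((j : ℚ) + 1)) := by
            rw [mul_assoc, hA]
    have hXeq : X = (-1) ^ k *
        ((∏ j ∈ Finset.range k, (1 - (p : ℚ) / ((j : ℚ) + 1))) - (1 - (p : ℚ) * S)) := by
      rw [hX, hchoose]; ring
    have hnorm : padicNorm p X ≤ (p : ℚ) ^ (-2 : ℤ) := by
      rw [hXeq]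
      rcases neg_one_pow_eq_or ℚ k with h | h <;> rw [h]
      · rw [one_mul]; exact claimB k hk
      · rw [neg_one_mul, padicNorm.neg]; exact claimB k hk
    rw [padicNorm.eq_zpow_of_nonzero h0] at hnorm
    have hp1 : (1 : ℚ) < p := by exact_mod_cast hp.one_lt
    have := (zpow_le_zpow_iff_right₀ hp1).mp hnorm
    omega
end
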